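/- Let Û and U be identically distributed, with g(U) uncorrelated with h(X) and with g(Û), and Cov(g(Û),g(Û)) = Cov(g(U),g(U)) invertible. Then the gain minimizing trace Cov(Z^h, Z^h) for Z^h = h(X) - S(g(Û)-g(U)) is S = (1/2) Cov(h(X), g(Û)) Cov(g(Û), g(Û))^{-1}. -/

import Mathlib

/-!
Put `C = g(Û) - g(U)` and `B = Cov(g(Û), g(Û)) = Cov(g(U), g(U))`. Since `g(U)` is uncorrelated
with `h(X)` and `g(Û)`, `Cov(h(X), C) = Cov(h(X), g(Û))` and `Cov(C, C) = 2B`, so `Sopt` solves the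
normal equations `S Cov(C, C) = Cov(h(X), C)`. For such an `S₀` the error `Z S₀` is uncorrelated
with `C`, and `Z S = Z S₀ - (S - S₀) C` gives
`Cov(Z S, Z S) = Cov(Z S₀, Z S₀) + Cov((S - S₀) C, (S - S₀) C)`, whose last trace is a sum of
variances.
-/

open MeasureTheory Matrix

/-- Component-wise mean of a random vector. -/
noncomputable def rmean {Ω : Type*} [MeasureSpace Ω] {ι : Type*}
    (X : Ω → ι → ℝ) : ι → ℝ := fun i => ∫ ω, X ω i

/-- Covariance matrix of two random vectors. -/
noncomputable def rcov {Ω : Type*} [MeasureSpace Ω] {ι κ : Type*}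
    (X : Ω → ι → ℝ) (Y : Ω → κ → ℝ) : Matrix ι κ ℝ :=
  Matrix.of fun i j => ∫ ω, (X ω i - rmean X i) * (Y ω j - rmean Y j)

open ProbabilityTheory

theorem MeasureTheory.MemLp.mulVec {α ι κ : Type*} [MeasurableSpace α] {μ : Measure α}
    {p : ENNReal} [Fintype ι] [Fintype κ] {X : α → ι → ℝ} (hX : MemLp X p μ)
    (S : Matrix κ ι ℝ) : MemLp (fun a => S *ᵥ X a) p μ :=
  MemLp.of_eval fun i => memLp_finsetSum _ fun k _ => (hX.eval k).const_mul (S i k)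

section
variable {Ω ι κ ν : Type*} [MeasureSpace Ω]

lemma rcov_apply (X : Ω → ι → ℝ) (Y : Ω → κ → ℝ) (i : ι) (j : κ) :
    rcov X Y i j = cov[(X · i), (Y · j)] := rfl

lemma rcov_transpose (X : Ω → ι → ℝ) (Y : Ω → κ → ℝ) : (rcov X Y)ᵀ = rcov Y X := by
  ext i j
  exact covariance_comm _ _

lemma trace_rcov_self_nonneg [Fintype ι] (X : Ω → ι → ℝ) : 0 ≤ (rcov X X).trace :=
  Finset.sum_nonneg fun _ _ => integral_nonneg fun _ => mul_self_nonneg _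

variable [IsFiniteMeasure (volume : Measure Ω)] [Fintype ι] [Fintype κ]

lemma rcov_sub_left {X Y : Ω → ι → ℝ} {W : Ω → κ → ℝ} (hX : MemLp X 2) (hY : MemLp Y 2)
    (hW : MemLp W 2) : rcov (fun ω => X ω - Y ω) W = rcov X W - rcov Y W := by
  ext i j
  exact covariance_fun_sub_left (hX.eval i) (hY.eval i) (hW.eval j)

lemma rcov_sub_right {W : Ω → κ → ℝ} {X Y : Ω → ι → ℝ} (hW : MemLp W 2) (hX : MemLp X 2)
    (hY : MemLp Y 2) : rcov W (fun ω => X ω - Y ω) = rcov W X - rcov W Y := by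
  rw [← rcov_transpose, rcov_sub_left hX hY hW, transpose_sub, rcov_transpose, rcov_transpose]

lemma rcov_sub_sub {X Y : Ω → ι → ℝ} {V W : Ω → κ → ℝ} (hX : MemLp X 2) (hY : MemLp Y 2)
    (hV : MemLp V 2) (hW : MemLp W 2) :
    rcov (fun ω => X ω - Y ω) (fun ω => V ω - W ω)
      = rcov X V - rcov X W - rcov Y V + rcov Y W := by
  ext i j
  exact covariance_fun_sub_fun_sub (hX.eval i) (hY.eval i) (hV.eval j) (hW.eval j)

lemma rcov_mulVec_left {X : Ω → ι → ℝ} {Y : Ω → κ → ℝ} (hX : MemLp X 2) (hY : MemLp Y 2)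
    (S : Matrix ν ι ℝ) : rcov (fun ω => S *ᵥ X ω) Y = S * rcov X Y := by
  ext i j
  simp only [rcov_apply, mulVec, dotProduct, mul_apply]
  rw [covariance_fun_sum_left (fun k => (hX.eval k).const_mul (S i k)) (hY.eval j)]
  simp only [covariance_const_mul_left]

lemma rcov_mulVec_right {X : Ω → ι → ℝ} {Y : Ω → κ → ℝ} (hX : MemLp X 2) (hY : MemLp Y 2)
    (S : Matrix ν κ ℝ) : rcov X (fun ω => S *ᵥ Y ω) = rcov X Y * Sᵀ := by
  rw [← rcov_transpose, rcov_mulVec_left hY hX, transpose_mul, rcov_transpose]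

theorem trace_rcov_sub_mulVec_le {H : Ω → ι → ℝ} {C : Ω → κ → ℝ} (hH : MemLp H 2)
    (hC : MemLp C 2) {S₀ : Matrix ι κ ℝ} (hS₀ : S₀ * rcov C C = rcov H C)
    (S : Matrix ι κ ℝ) :
    (rcov (fun ω => H ω - S₀ *ᵥ C ω) (fun ω => H ω - S₀ *ᵥ C ω)).trace
      ≤ (rcov (fun ω => H ω - S *ᵥ C ω) (fun ω => H ω - S *ᵥ C ω)).trace := by
  set E := fun ω => H ω - S₀ *ᵥ C ω
  set W := fun ω => (S - S₀) *ᵥ C ω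
  have hE : MemLp E 2 := hH.sub (hC.mulVec S₀)
  have hW : MemLp W 2 := hC.mulVec (S - S₀)
  have horth : rcov E C = 0 := by
    rw [rcov_sub_left hH (hC.mulVec S₀) hC, rcov_mulVec_left hC hC, hS₀, sub_self]
  have hEW : rcov E W = 0 := by rw [rcov_mulVec_right hE hC, horth, Matrix.zero_mul]
  have hsplit : (fun ω => H ω - S *ᵥ C ω) = fun ω => E ω - W ω := by
    ext ω : 1
    simp only [E, W, sub_mulVec]
    abel
  rw [hsplit, rcov_sub_sub hE hW hE hW, ← rcov_transpose E W, hEW, transpose_zero, sub_zero,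
    sub_zero, trace_add]
  linarith [trace_rcov_self_nonneg W]

end

theorem nonlinear_optimal_gain_general
    {Ω : Type*} [MeasureSpace Ω] [IsProbabilityMeasure (volume : Measure Ω)]
    {n r m : ℕ} (X : Ω → Fin n → ℝ) (Uhat U : Ω → Fin r → ℝ)
    (g : (Fin r → ℝ) → Fin m → ℝ) (h : (Fin n → ℝ) → Fin m → ℝ)
    (hhX : ∀ i, MemLp (fun ω => h (X ω) i) 2)
    (hgUhat : ∀ i, MemLp (fun ω => g (Uhat ω) i) 2)
    (hgU : ∀ i, MemLp (fun ω => g (U ω) i) 2)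
    (huncorr1 : rcov (fun ω => g (U ω)) (fun ω => h (X ω)) = 0)
    (huncorr2 : rcov (fun ω => g (U ω)) (fun ω => g (Uhat ω)) = 0)
    (hcoveq : rcov (fun ω => g (Uhat ω)) (fun ω => g (Uhat ω))
              = rcov (fun ω => g (U ω)) (fun ω => g (U ω)))
    (hpd : (rcov (fun ω => g (Uhat ω)) (fun ω => g (Uhat ω))).PosDef)
    (Z : Matrix (Fin m) (Fin m) ℝ → Ω → Fin m → ℝ)
    (hZ : ∀ S ω, Z S ω = h (X ω) - S.mulVec (g (Uhat ω) - g (U ω)))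
    (Sopt : Matrix (Fin m) (Fin m) ℝ)
    (hSopt : Sopt = (1 / 2 : ℝ) • (rcov (fun ω => h (X ω)) (fun ω => g (Uhat ω))
        * (rcov (fun ω => g (Uhat ω)) (fun ω => g (Uhat ω)))⁻¹)) :
    ∀ S : Matrix (Fin m) (Fin m) ℝ,
      (rcov (Z Sopt) (Z Sopt)).trace ≤ (rcov (Z S) (Z S)).trace := by
  intro S
  have hH := MemLp.of_eval hhX
  have hG := MemLp.of_eval hgUhat
  have hF := MemLp.of_eval hgU
  set B := rcov (fun ω => g (Uhat ω)) (fun ω => g (Uhat ω))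
  have hHC : rcov (fun ω => h (X ω)) (fun ω => g (Uhat ω) - g (U ω))
      = rcov (fun ω => h (X ω)) (fun ω => g (Uhat ω)) := by
    rw [rcov_sub_right hH hG hF, ← rcov_transpose (fun ω => g (U ω)), huncorr1, transpose_zero,
      sub_zero]
  have hCC : rcov (fun ω => g (Uhat ω) - g (U ω)) (fun ω => g (Uhat ω) - g (U ω))
      = (2 : ℝ) • B := by
    rw [rcov_sub_sub hG hF hG hF, huncorr2, ← rcov_transpose (fun ω => g (U ω)), huncorr2,
      ← hcoveq, transpose_zero, sub_zero, sub_zero, two_smul]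
  have hnormal : Sopt * rcov (fun ω => g (Uhat ω) - g (U ω)) (fun ω => g (Uhat ω) - g (U ω))
      = rcov (fun ω => h (X ω)) (fun ω => g (Uhat ω) - g (U ω)) := by
    have hB : IsUnit B.det := hpd.isUnit.map detMonoidHom
    rw [hCC, hHC, hSopt, mul_smul_comm, smul_mul_assoc, smul_smul,
      nonsing_inv_mul_cancel_right _ _ hB]
    norm_num
  rw [show Z = _ from funext₂ hZ]
  exact trace_rcov_sub_mulVec_le hH (hG.sub hF) hnormal S

/-- **Optimal gain for nonlinearly transformed variates.** If `Û` and `U` are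
identically distributed, `g(U)` is uncorrelated with `h(X)` and `g(Û)`, and
`Cov(g(Û),g(Û)) = Cov(g(U),g(U))` is positive definite, then the gain minimizing
`trace Cov(Zʰ,Zʰ)` for `Zʰ = h(X) - S(g(Û)-g(U))` is
`S = (1/2) Cov(h(X),g(Û)) Cov(g(Û),g(Û))⁻¹`. -/
theorem nonlinear_optimal_gain
    {Ω : Type*} [MeasureSpace Ω] [IsProbabilityMeasure (volume : Measure Ω)]
    {n r m : ℕ} (X : Ω → Fin n → ℝ) (Uhat U : Ω → Fin r → ℝ)
    (g : (Fin r → ℝ) → Fin m → ℝ) (h : (Fin n → ℝ) → Fin m → ℝ)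
    (hlaw : (volume : Measure Ω).map Uhat = (volume : Measure Ω).map U)
    (hhX : ∀ i, MemLp (fun ω => h (X ω) i) 2)
    (hgUhat : ∀ i, MemLp (fun ω => g (Uhat ω) i) 2)
    (hgU : ∀ i, MemLp (fun ω => g (U ω) i) 2)
    (huncorr1 : rcov (fun ω => g (U ω)) (fun ω => h (X ω)) = 0)
    (huncorr2 : rcov (fun ω => g (U ω)) (fun ω => g (Uhat ω)) = 0)
    (hcoveq : rcov (fun ω => g (Uhat ω)) (fun ω => g (Uhat ω))
              = rcov (fun ω => g (U ω)) (fun ω => g (U ω)))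
    (hpd : (rcov (fun ω => g (Uhat ω)) (fun ω => g (Uhat ω))).PosDef)
    (Z : Matrix (Fin m) (Fin m) ℝ → Ω → Fin m → ℝ)
    (hZ : ∀ S ω, Z S ω = h (X ω) - S.mulVec (g (Uhat ω) - g (U ω)))
    (Sopt : Matrix (Fin m) (Fin m) ℝ)
    (hSopt : Sopt = (1 / 2 : ℝ) • (rcov (fun ω => h (X ω)) (fun ω => g (Uhat ω))
        * (rcov (fun ω => g (Uhat ω)) (fun ω => g (Uhat ω)))⁻¹)) :
    ∀ S : Matrix (Fin m) (Fin m) ℝ,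
      (rcov (Z Sopt) (Z Sopt)).trace ≤ (rcov (Z S) (Z S)).trace :=
  nonlinear_optimal_gain_general X Uhat U g h hhX hgUhat hgU huncorr1 huncorr2 hcoveq hpd Z hZ Sopt
    hSopt
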